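/- arXiv:2106.01959 — 10 statements merged into one kernel-verified Lean document; each statement's English description precedes it below -/
import Mathlib

section
/- Let a,b,c,d be integers with ad − bc = 1 and |a + d| > 2, set N = |a + d + 2| and r = gcd(a+1, c, b, d+1). Then the image of the group homomorphism f : ℤ × ℤ → ℤ/N × ℤ/N given by f(μ,ν) = ((d+1)μ − cν, −bμ + (a+1)ν) is isomorphic, as an abelian group, to ℤ/r × ℤ/(N/r). -/
/-- The homomorphism `f : ℤ × ℤ → ℤ/N × ℤ/N`,
`f(μ,ν) = ((d+1)μ − cν, −bμ + (a+1)ν)`. -/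
def torusBundleF (a b c d : ℤ) (N : ℕ) : ℤ × ℤ →+ ZMod N × ZMod N :=
  AddMonoidHom.mk'
    (fun p => ((((d + 1) * p.1 - c * p.2 : ℤ) : ZMod N),
               (((-b) * p.1 + (a + 1) * p.2 : ℤ) : ZMod N)))
    (by
      intro p q
      simp only [Prod.fst_add, Prod.snd_add, Prod.mk_add_mk, Prod.mk.injEq]
      constructor <;> · push_cast; ring)

/-!
Since `ad - bc = 1`, the matrix `B = ((a+1, c), (b, d+1))` has determinant `a + d + 2 = ±N`,
and `f` is reduction mod `N` of its adjugate. Hence `ker f = B ℤ²` and `im f ≅ ℤ² / B ℤ²`.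
If `diag(α₀, α₁)` is a Smith normal form of `B`, then `|α₀ α₁| = [ℤ² : B ℤ²] = N`, and
`gcd(α₀, α₁) = r` because both are the largest `k` with `B ℤ² ⊆ k ℤ²`. Finally a unimodular
change of basis built from a Bézout relation turns `ℤ/α₀ × ℤ/α₁` into `ℤ/gcd × ℤ/lcm`.
-/

open Module Submodule Pointwise

def diagLattice (m n : ℤ) : Submodule ℤ (ℤ × ℤ) :=
  Submodule.prod (Ideal.span {m}) (Ideal.span {n})

theorem mem_diagLattice {m n : ℤ} {x : ℤ × ℤ} : x ∈ diagLattice m n ↔ m ∣ x.1 ∧ n ∣ x.2 := by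
  simp only [diagLattice, mem_prod, Ideal.mem_span_singleton]

noncomputable def zmodProdCastLinearMap (m n : ℤ) :
    ℤ × ℤ →ₗ[ℤ] ZMod m.natAbs × ZMod n.natAbs :=
  ((Int.castAddHom (ZMod m.natAbs)).prodMap (Int.castAddHom (ZMod n.natAbs))).toIntLinearMap

theorem ker_zmodProdCastLinearMap (m n : ℤ) :
    LinearMap.ker (zmodProdCastLinearMap m n) = diagLattice m n := by
  ext x
  rw [LinearMap.mem_ker, mem_diagLattice]
  simp [zmodProdCastLinearMap, Prod.ext_iff, ZMod.intCast_zmod_eq_zero_iff_dvd]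

theorem zmodProdCastLinearMap_surjective (m n : ℤ) :
    Function.Surjective (zmodProdCastLinearMap m n) :=
  fun y => ⟨(y.1.valMinAbs, y.2.valMinAbs), by simp [zmodProdCastLinearMap]⟩

noncomputable def quotientDiagLatticeAddEquiv (m n : ℤ) :
    (ℤ × ℤ) ⧸ diagLattice m n ≃+ ZMod m.natAbs × ZMod n.natAbs :=
  ((quotEquivOfEq _ _ (ker_zmodProdCastLinearMap m n).symm).trans
    ((zmodProdCastLinearMap m n).quotKerEquivOfSurjective
      (zmodProdCastLinearMap_surjective m n))).toAddEquiv

/-- The witness is the unimodular matrix `((u, v), (-n, m))`: it sends the columns of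
`diag(m g, n g)` to `(u m g, -m n g)` and `(v n g, m n g)`, which span the same lattice as
`(g, 0)` and `(0, m n g)`. -/
theorem exists_linearEquiv_map_diagLattice (g m n u v : ℤ) (huv : u * m + v * n = 1) :
    ∃ e : (ℤ × ℤ) ≃ₗ[ℤ] ℤ × ℤ,
      (diagLattice (m * g) (n * g)).map (e : (ℤ × ℤ) →ₗ[ℤ] ℤ × ℤ) = diagLattice g (m * n * g) := by
  let e : (ℤ × ℤ) ≃ₗ[ℤ] ℤ × ℤ :=
    { toFun := fun x => (u * x.1 + v * x.2, -n * x.1 + m * x.2)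
      invFun := fun x => (m * x.1 - v * x.2, n * x.1 + u * x.2)
      map_add' := fun x y => by ext <;> dsimp <;> ring
      map_smul' := fun k x => by ext <;> dsimp <;> ring
      left_inv := fun x => by
        ext
        · linear_combination x.1 * huv
        · linear_combination x.2 * huv
      right_inv := fun x => by
        ext
        · linear_combination x.1 * huv
        · linear_combination x.2 * huv }
  refine ⟨e, ?_⟩
  ext ⟨X, Y⟩
  simp only [mem_map_equiv, mem_diagLattice]
  show m * g ∣ m * X - v * Y ∧ n * g ∣ n * X + u * Y ↔ g ∣ X ∧ m * n * g ∣ Y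
  constructor
  · rintro ⟨⟨s, hs⟩, ⟨t, ht⟩⟩
    exact ⟨⟨u * m * s + v * n * t, by linear_combination u * hs + v * ht - X * huv⟩,
      ⟨t - s, by linear_combination m * ht - n * hs - Y * huv⟩⟩
  · rintro ⟨⟨s, rfl⟩, ⟨t, rfl⟩⟩
    exact ⟨⟨s - v * n * t, by ring⟩, ⟨s + u * m * t, by ring⟩⟩

theorem nonempty_zmod_prod_addEquiv_gcd (m n : ℤ) (hm : m ≠ 0) :
    Nonempty (ZMod m.natAbs × ZMod n.natAbs ≃+
      ZMod (Int.gcd m n) × ZMod (m.natAbs * n.natAbs / Int.gcd m n)) := by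
  obtain ⟨g, m', n', hg, hcop, rfl, rfl⟩ :=
    Int.exists_gcd_one' (Int.gcd_pos_of_ne_zero_left n hm)
  obtain ⟨u, v, huv⟩ := Int.isCoprime_iff_gcd_eq_one.mpr hcop
  obtain ⟨e, he⟩ := exists_linearEquiv_map_diagLattice g m' n' u v huv
  have hlcm : (m' * g).natAbs * (n' * g).natAbs / g = (m' * n' * g).natAbs := by
    simp only [Int.natAbs_mul, Int.natAbs_natCast]
    rw [show m'.natAbs * g * (n'.natAbs * g) = m'.natAbs * n'.natAbs * g * g by ring,
      Nat.mul_div_cancel _ hg]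
  rw [Int.gcd_mul_right, hcop, one_mul, Int.natAbs_natCast, hlcm]
  exact ⟨(quotientDiagLatticeAddEquiv _ _).symm.trans
    ((Quotient.equiv _ _ e he).toAddEquiv.trans (quotientDiagLatticeAddEquiv _ _))⟩

theorem Module.Basis.mem_smul_top_iff_forall_dvd {ι R M : Type*} [CommSemiring R]
    [AddCommMonoid M] [Module R M] [Fintype ι] (b : Basis ι R M) (k : R) (x : M) :
    x ∈ k • (⊤ : Submodule R M) ↔ ∀ i, k ∣ b.repr x i := by
  rw [mem_smul_pointwise_iff_exists]
  constructor
  · rintro ⟨y, -, rfl⟩ i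
    exact ⟨b.repr y i, by simp⟩
  · intro h
    choose c hc using h
    exact ⟨∑ i, c i • b i, trivial, b.ext_elem fun i => by
      rw [hc, map_smul, Finsupp.smul_apply, b.repr_sum_self, smul_eq_mul]⟩

theorem span_pair_le_smul_top_iff (w₁ w₂ : ℤ × ℤ) (k : ℤ) :
    span ℤ {w₁, w₂} ≤ k • ⊤ ↔ k ∣ Int.gcd w₁.1 (Int.gcd w₂.1 (Int.gcd w₁.2 w₂.2)) := by
  simp only [span_le, Set.insert_subset_iff, Set.singleton_subset_iff, SetLike.mem_coe,
    (Basis.finTwoProd ℤ).mem_smul_top_iff_forall_dvd, Fin.forall_fin_two, Int.dvd_coe_gcd_iff,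
    Basis.coe_finTwoProd_repr, Matrix.cons_val_zero, Matrix.cons_val_one]
  tauto

theorem Module.Basis.span_range_coe {ι R M : Type*} [Semiring R] [AddCommMonoid M] [Module R M]
    {N : Submodule R M} (b : Basis ι R N) : span R (Set.range fun i => (b i : M)) = N := by
  rw [Set.range_comp' Subtype.val b, ← N.coe_subtype, span_image, b.span_eq, Submodule.map_top,
    range_subtype]

theorem le_smul_top_iff_dvd_smithNormalFormCoeffs {ι R M : Type*} [CommRing R] [IsDomain R]
    [IsPrincipalIdealRing R] [AddCommGroup M] [Module R M] [Finite ι] {N : Submodule R M}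
    (b : Basis ι R M) (h : finrank R N = finrank R M) (k : R) :
    N ≤ k • ⊤ ↔ ∀ i, k ∣ smithNormalFormCoeffs b h i := by
  have := Fintype.ofFinite ι
  conv_lhs => rw [← (smithNormalFormBotBasis b h).span_range_coe, span_le, Set.range_subset_iff]
  simp only [SetLike.mem_coe, smithNormalFormBotBasis_def,
    (smithNormalFormTopBasis b h).mem_smul_top_iff_forall_dvd, map_smul, Basis.repr_self,
    Finsupp.smul_apply, smul_eq_mul]
  constructor
  · intro H i
    simpa using H i i
  · intro H i j
    exact dvd_mul_of_dvd_left (H i) _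

theorem linearIndependent_pair_of_det_ne_zero {w₁ w₂ : ℤ × ℤ}
    (hdet : w₁.1 * w₂.2 - w₁.2 * w₂.1 ≠ 0) : LinearIndependent ℤ ![w₁, w₂] := by
  refine LinearIndependent.pair_iff.mpr fun s t hst => ?_
  have h₁ : s * w₁.1 + t * w₂.1 = 0 := congrArg Prod.fst hst
  have h₂ : s * w₁.2 + t * w₂.2 = 0 := congrArg Prod.snd hst
  constructor
  · exact (mul_eq_zero.mp (by linear_combination w₂.2 * h₁ - w₂.1 * h₂ :
      s * (w₁.1 * w₂.2 - w₁.2 * w₂.1) = 0)).resolve_right hdet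
  · exact (mul_eq_zero.mp (by linear_combination w₁.1 * h₂ - w₁.2 * h₁ :
      t * (w₁.1 * w₂.2 - w₁.2 * w₂.1) = 0)).resolve_right hdet

theorem card_quotient_span_pair {w₁ w₂ : ℤ × ℤ} (hli : LinearIndependent ℤ ![w₁, w₂]) :
    Nat.card ((ℤ × ℤ) ⧸ span ℤ {w₁, w₂}) = (w₁.1 * w₂.2 - w₁.2 * w₂.1).natAbs := by
  let bL : Basis (Fin 2) ℤ (span ℤ {w₁, w₂}) :=
    (Basis.span hli).map (LinearEquiv.ofEq _ _ (by rw [Matrix.range_cons_cons_empty]))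
  rw [← natAbs_det_basis_change (Basis.finTwoProd ℤ) _ bL, Basis.det_apply, Matrix.det_fin_two]
  simp [bL, Basis.toMatrix_apply, Basis.span_apply, mul_comm w₂.1]

theorem nonempty_quotient_span_pair_addEquiv (w₁ w₂ : ℤ × ℤ)
    (hdet : w₁.1 * w₂.2 - w₁.2 * w₂.1 ≠ 0) :
    Nonempty ((ℤ × ℤ) ⧸ span ℤ {w₁, w₂} ≃+
      ZMod (Int.gcd w₁.1 (Int.gcd w₂.1 (Int.gcd w₁.2 w₂.2))) ×
      ZMod ((w₁.1 * w₂.2 - w₁.2 * w₂.1).natAbs /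
        Int.gcd w₁.1 (Int.gcd w₂.1 (Int.gcd w₁.2 w₂.2)))) := by
  set g := Int.gcd w₁.1 (Int.gcd w₂.1 (Int.gcd w₁.2 w₂.2))
  have hli := linearIndependent_pair_of_det_ne_zero hdet
  have hrank : finrank ℤ (span ℤ {w₁, w₂}) = finrank ℤ (ℤ × ℤ) := by
    rw [← Matrix.range_cons_cons_empty w₁ w₂ ![], finrank_span_eq_card hli, Fintype.card_fin,
      finrank_prod, finrank_self]
  set a := smithNormalFormCoeffs (Basis.finTwoProd ℤ) hrank
  let E : (ℤ × ℤ) ⧸ span ℤ {w₁, w₂} ≃+ ZMod (a 0).natAbs × ZMod (a 1).natAbs :=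
    (quotientEquivPiZMod _ _ hrank).trans
      (LinearEquiv.piFinTwo ℤ fun i => ZMod (a i).natAbs).toAddEquiv
  have hcard : (a 0).natAbs * (a 1).natAbs = (w₁.1 * w₂.2 - w₁.2 * w₂.1).natAbs := by
    rw [← card_quotient_span_pair hli, Nat.card_congr E.toEquiv, Nat.card_prod, Nat.card_zmod,
      Nat.card_zmod]
  have hdvd (k : ℤ) : k ∣ g ↔ k ∣ Int.gcd (a 0) (a 1) := by
    rw [← span_pair_le_smul_top_iff,
      le_smul_top_iff_dvd_smithNormalFormCoeffs (Basis.finTwoProd ℤ) hrank, Fin.forall_fin_two,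
      Int.dvd_coe_gcd_iff]
  have hgcd : g = Int.gcd (a 0) (a 1) := Nat.dvd_antisymm
    (Int.natCast_dvd_natCast.mp ((hdvd _).mp dvd_rfl))
    (Int.natCast_dvd_natCast.mp ((hdvd _).mpr dvd_rfl))
  obtain ⟨E'⟩ := nonempty_zmod_prod_addEquiv_gcd (a 0) (a 1)
    (smithNormalFormCoeffs_ne_zero _ hrank 0)
  rw [hgcd, ← hcard]
  exact ⟨E.trans E'⟩

theorem mem_span_pair_iff_dvd_adjugate {p q s t : ℤ} (hΔ : p * t - q * s ≠ 0) (x : ℤ × ℤ) :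
    x ∈ span ℤ {(p, q), (s, t)} ↔
      p * t - q * s ∣ t * x.1 - s * x.2 ∧ p * t - q * s ∣ -q * x.1 + p * x.2 := by
  rw [mem_span_pair]
  constructor
  · rintro ⟨μ, ν, rfl⟩
    exact ⟨⟨μ, by dsimp; ring⟩, ⟨ν, by dsimp; ring⟩⟩
  · rintro ⟨⟨μ, hμ⟩, ⟨ν, hν⟩⟩
    refine ⟨μ, ν, Prod.ext (mul_left_cancel₀ hΔ ?_) (mul_left_cancel₀ hΔ ?_)⟩
    · simp only [Prod.fst_add, Prod.smul_fst, smul_eq_mul]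
      linear_combination -p * hμ - s * hν
    · simp only [Prod.snd_add, Prod.smul_snd, smul_eq_mul]
      linear_combination -q * hμ - t * hν

theorem ker_torusBundleF {a b c d : ℤ} (h1 : a * d - b * c = 1) (hD : a + d + 2 ≠ 0) :
    (torusBundleF a b c d (a + d + 2).natAbs).ker =
      (span ℤ {(a + 1, b), (c, d + 1)}).toAddSubgroup := by
  have hΔ : (a + 1) * (d + 1) - b * c = a + d + 2 := by linear_combination h1
  ext x
  rw [AddMonoidHom.mem_ker, Submodule.mem_toAddSubgroup,
    mem_span_pair_iff_dvd_adjugate (hΔ ▸ hD), hΔ]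
  simp only [torusBundleF, AddMonoidHom.mk'_apply, Prod.mk_eq_zero,
    ZMod.intCast_zmod_eq_zero_iff_dvd, Int.natAbs_dvd]

theorem stmt_0 (a b c d : ℤ) (h1 : a * d - b * c = 1) (h2 : 2 < |a + d|)
    (N : ℕ) (hN : N = (a + d + 2).natAbs)
    (r : ℕ) (hr : r = Int.gcd (a + 1) (Int.gcd c (Int.gcd b (d + 1)))) :
    Nonempty ((torusBundleF a b c d N).range ≃+ ZMod r × ZMod (N / r)) := by
  have hD : a + d + 2 ≠ 0 := by
    intro h
    rw [show a + d = -2 by omega] at h2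
    norm_num at h2
  have hΔ : (a + 1) * (d + 1) - b * c = a + d + 2 := by linear_combination h1
  obtain ⟨E⟩ := nonempty_quotient_span_pair_addEquiv (a + 1, b) (c, d + 1) (hΔ ▸ hD)
  dsimp only at E
  rw [hΔ, ← hr, ← hN] at E
  subst hN
  exact ⟨(QuotientAddGroup.quotientKerEquivRange _).symm.trans
    ((QuotientAddGroup.quotientAddEquivOfEq (ker_torusBundleF h1 hD)).trans E)⟩
end

section
/- Let a,b,c,d be integers with ad − bc = 1 and set N = |a + d + 2|. Then the image of f equals the solution set {(k,l) ∈ ℤ/N × ℤ/N : (a+1)k + c·l = 0 and b·k + (d+1)l = 0}. -/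
theorem stmt_1 (a b c d : ℤ) (h1 : a * d - b * c = 1) (h2 : 2 < |a + d|)
    (N : ℕ) (hN : N = (a + d + 2).natAbs) :
    ((torusBundleF a b c d N).range : Set (ZMod N × ZMod N)) =
      {p : ZMod N × ZMod N |
        ((a + 1 : ℤ) : ZMod N) * p.1 + (c : ZMod N) * p.2 = 0 ∧
        (b : ZMod N) * p.1 + ((d + 1 : ℤ) : ZMod N) * p.2 = 0} := by
  have he0 : a + d + 2 ≠ 0 := by
    rcases lt_abs.mp h2 with h | h <;> omega
  have hNne : (N : ℤ) ≠ 0 := by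
    rw [hN]
    simpa using he0
  have he : ((a + d + 2 : ℤ) : ZMod N) = 0 := by
    rw [ZMod.intCast_zmod_eq_zero_iff_dvd, hN]
    exact Int.natAbs_dvd.mpr dvd_rfl
  ext p
  simp only [SetLike.mem_coe, AddMonoidHom.mem_range, Set.mem_setOf_eq]
  constructor
  · rintro ⟨⟨μ, ν⟩, rfl⟩
    simp only [torusBundleF, AddMonoidHom.mk'_apply]
    constructor
    · have e1 : ((a + 1) * ((d + 1) * μ - c * ν) + c * ((-b) * μ + (a + 1) * ν) : ℤ)
          = (a + d + 2) * μ := by linear_combination μ * h1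
      calc ((a + 1 : ℤ) : ZMod N) * (((d + 1) * μ - c * ν : ℤ) : ZMod N)
            + (c : ZMod N) * (((-b) * μ + (a + 1) * ν : ℤ) : ZMod N)
          = (((a + 1) * ((d + 1) * μ - c * ν) + c * ((-b) * μ + (a + 1) * ν) : ℤ) : ZMod N) := by
            push_cast; ring
        _ = (((a + d + 2) * μ : ℤ) : ZMod N) := by rw [e1]
        _ = 0 := by push_cast [he]; ring
    · have e2 : (b * ((d + 1) * μ - c * ν) + (d + 1) * ((-b) * μ + (a + 1) * ν) : ℤ)
          = (a + d + 2) * ν := by linear_combination ν * h1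
      calc (b : ZMod N) * (((d + 1) * μ - c * ν : ℤ) : ZMod N)
            + ((d + 1 : ℤ) : ZMod N) * (((-b) * μ + (a + 1) * ν : ℤ) : ZMod N)
          = ((b * ((d + 1) * μ - c * ν) + (d + 1) * ((-b) * μ + (a + 1) * ν) : ℤ) : ZMod N) := by
            push_cast; ring
        _ = (((a + d + 2) * ν : ℤ) : ZMod N) := by rw [e2]
        _ = 0 := by push_cast [he]; ring
  · rintro ⟨hp1, hp2⟩
    obtain ⟨K, hK⟩ := ZMod.intCast_surjective p.1
    obtain ⟨L, hL⟩ := ZMod.intCast_surjective p.2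
    have d1 : (N : ℤ) ∣ (a + 1) * K + c * L := by
      rw [← ZMod.intCast_zmod_eq_zero_iff_dvd]
      push_cast
      rw [hK, hL]
      push_cast at hp1
      linear_combination hp1
    have d2 : (N : ℤ) ∣ b * K + (d + 1) * L := by
      rw [← ZMod.intCast_zmod_eq_zero_iff_dvd]
      push_cast
      rw [hK, hL]
      push_cast at hp2
      linear_combination hp2
    obtain ⟨s, hs⟩ := d1
    obtain ⟨t, ht⟩ := d2
    have habs : (a + d + 2 = (N : ℤ)) ∨ (a + d + 2 = -(N : ℤ)) := by
      rw [hN]; exact Int.natAbs_eq _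
    rcases habs with hε | hε
    · refine ⟨(s, t), ?_⟩
      have eK : (d + 1) * s - c * t = K := by
        have : (N : ℤ) * ((d + 1) * s - c * t) = (N : ℤ) * K := by
          linear_combination -(d + 1) * hs + c * ht + K * hε + K * h1
        exact mul_left_cancel₀ hNne this
      have eL : (-b) * s + (a + 1) * t = L := by
        have : (N : ℤ) * ((-b) * s + (a + 1) * t) = (N : ℤ) * L := by
          linear_combination b * hs - (a + 1) * ht + L * hε + L * h1
        exact mul_left_cancel₀ hNne this
      simp only [torusBundleF, AddMonoidHom.mk'_apply]
      rw [eK, eL, hK, hL]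
    · refine ⟨(-s, -t), ?_⟩
      have eK : (d + 1) * (-s) - c * (-t) = K := by
        have : (N : ℤ) * ((d + 1) * (-s) - c * (-t)) = (N : ℤ) * K := by
          linear_combination (d + 1) * hs - c * ht - K * hε - K * h1
        exact mul_left_cancel₀ hNne this
      have eL : (-b) * (-s) + (a + 1) * (-t) = L := by
        have : (N : ℤ) * ((-b) * (-s) + (a + 1) * (-t)) = (N : ℤ) * L := by
          linear_combination (-b) * hs + (a + 1) * ht - L * hε - L * h1
        exact mul_left_cancel₀ hNne this
      simp only [torusBundleF, AddMonoidHom.mk'_apply]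
      rw [eK, eL, hK, hL]
end

section
/- Let a,b,c,d be integers with ad − bc = 1 and set N = |a + d + 2|, with |a + d| > 2. Then the kernel of f equals the subgroup of ℤ × ℤ generated by the two elements (a+1, b) and (c, d+1); equivalently, ker f is the image of the ℤ-linear map g : ℤ × ℤ → ℤ × ℤ given by g(i,j) = ((a+1)i + cj, bi + (d+1)j). -/
/-- The ℤ-linear map `g : ℤ × ℤ → ℤ × ℤ`, `g(i,j) = ((a+1)i + cj, bi + (d+1)j)`. -/
def torusBundleG (a b c d : ℤ) : ℤ × ℤ →+ ℤ × ℤ :=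
  AddMonoidHom.mk'
    (fun p => ((a + 1) * p.1 + c * p.2, b * p.1 + (d + 1) * p.2))
    (by
      intro p q
      simp only [Prod.fst_add, Prod.snd_add, Prod.mk_add_mk, Prod.mk.injEq]
      constructor <;> ring)

theorem stmt_2 (a b c d : ℤ) (h1 : a * d - b * c = 1) (h2 : 2 < |a + d|)
    (N : ℕ) (hN : N = (a + d + 2).natAbs) :
    (torusBundleF a b c d N).ker
        = AddSubgroup.closure {((a + 1, b) : ℤ × ℤ), ((c, d + 1) : ℤ × ℤ)} ∧
      (torusBundleF a b c d N).ker = (torusBundleG a b c d).range := by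
  have he : (a + d + 2) = N ∨ (a + d + 2) = -(N : ℤ) := by
    rw [hN]; exact Int.natAbs_eq _
  have hdet : (a + 1) * (d + 1) - b * c = a + d + 2 := by linarith
  have key : (torusBundleF a b c d N).ker = (torusBundleG a b c d).range := by
    ext ⟨μ, ν⟩
    simp only [AddMonoidHom.mem_ker, AddMonoidHom.mem_range, torusBundleF, torusBundleG,
      AddMonoidHom.mk'_apply, Prod.mk.injEq, Prod.ext_iff, Prod.fst_zero, Prod.snd_zero,
      ZMod.intCast_zmod_eq_zero_iff_dvd, Prod.exists]
    constructor
    · rintro ⟨⟨k, hk⟩, ⟨l, hl⟩⟩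
      have hμ : (a + d + 2) * μ = (N : ℤ) * ((a + 1) * k + c * l) := by
        have : (a + d + 2) * μ = (a + 1) * ((d + 1) * μ - c * ν) + c * (-b * μ + (a + 1) * ν) := by linear_combination (-μ) * h1
        rw [this, hk, hl]; ring
      have hν : (a + d + 2) * ν = (N : ℤ) * (b * k + (d + 1) * l) := by
        have : (a + d + 2) * ν = b * ((d + 1) * μ - c * ν) + (d + 1) * (-b * μ + (a + 1) * ν) := by linear_combination (-ν) * h1
        rw [this, hk, hl]; ring
      have hN0 : (N : ℤ) ≠ 0 := by
        rcases he with h | h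
        · intro h0; rw [h0] at h; rw [show a + d = -2 by linarith] at h2; simp at h2
        · intro h0; rw [h0] at h; simp at h; rw [show a + d = -2 by linarith] at h2; simp at h2
      rcases he with h | h
      · refine ⟨k, l, ?_, ?_⟩
        · have := hμ; rw [h] at this; exact (mul_left_cancel₀ hN0 this).symm
        · have := hν; rw [h] at this; exact (mul_left_cancel₀ hN0 this).symm
      · refine ⟨-k, -l, ?_, ?_⟩
        · have : (N : ℤ) * μ = (N : ℤ) * ((a + 1) * (-k) + c * (-l)) := by
            rw [h] at hμ; linarith
          exact (mul_left_cancel₀ hN0 this).symm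
        · have : (N : ℤ) * ν = (N : ℤ) * (b * (-k) + (d + 1) * (-l)) := by
            rw [h] at hν; linarith
          exact (mul_left_cancel₀ hN0 this).symm
    · rintro ⟨i, j, hi, hj⟩
      have hNd : (N : ℤ) ∣ (a + d + 2) := by
        rcases he with h | h
        · exact ⟨1, by linarith⟩
        · exact ⟨-1, by linarith⟩
      constructor
      · have : (d + 1) * μ - c * ν = (a + d + 2) * i := by
          rw [← hi, ← hj]; linear_combination i * h1
        rw [this]; exact hNd.mul_right i
      · have : -b * μ + (a + 1) * ν = (a + d + 2) * j := by
          rw [← hi, ← hj]; linear_combination j * h1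
        rw [this]; exact hNd.mul_right j
  have gen : (torusBundleG a b c d).range
      = AddSubgroup.closure {((a + 1, b) : ℤ × ℤ), ((c, d + 1) : ℤ × ℤ)} := by
    apply le_antisymm
    · rintro p ⟨⟨i, j⟩, rfl⟩
      have hu : ((a + 1, b) : ℤ × ℤ) ∈ AddSubgroup.closure {((a + 1, b) : ℤ × ℤ), ((c, d + 1) : ℤ × ℤ)} :=
        AddSubgroup.subset_closure (by simp)
      have hv : ((c, d + 1) : ℤ × ℤ) ∈ AddSubgroup.closure {((a + 1, b) : ℤ × ℤ), ((c, d + 1) : ℤ × ℤ)} :=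
        AddSubgroup.subset_closure (by simp)
      have : torusBundleG a b c d (i, j) = i • ((a + 1, b) : ℤ × ℤ) + j • ((c, d + 1) : ℤ × ℤ) := by
        simp [torusBundleG, AddMonoidHom.mk'_apply, Prod.ext_iff, Prod.smul_def, smul_eq_mul]
        constructor <;> ring
      rw [this]
      exact AddSubgroup.add_mem _ (AddSubgroup.zsmul_mem _ hu i) (AddSubgroup.zsmul_mem _ hv j)
    · rw [AddSubgroup.closure_le]
      rintro p (rfl | rfl)
      · exact ⟨(1, 0), by simp [torusBundleG, AddMonoidHom.mk'_apply]⟩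
      · exact ⟨(0, 1), by simp [torusBundleG, AddMonoidHom.mk'_apply]⟩
  exact ⟨key.trans gen, key⟩
end

section
/- Let a,b,c,d ∈ ℤ, let N be a positive integer, let ζ = exp(2πi/N) ∈ ℂ, and let k,l ∈ ℤ. Set X = diag(ζ^k, ζ^{−k}), Y = diag(ζ^l, ζ^{−l}), and H = ((0,1),(−1,0)) in SL(2,ℂ). Then the relations X^a Y^c = H⁻¹ X H, X^b Y^d = H⁻¹ Y H, and X Y = Y X all hold if and only if N divides (a+1)k + c·l and N divides b·k + (d+1)l. -/
/-!
The map `u ↦ diag(u, u⁻¹)` is an injective homomorphism `Rˣ →* SL(2, R)`, and conjugation by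
`H = ((0, 1), (-1, 0))` acts on its image as inversion. Since `X` and `Y` are the images of `ζ ^ k`
and `ζ ^ l`, they commute, and each remaining relation becomes one equation `ζ ^ n = 1`, which
holds iff `N ∣ n` because `ζ` is a primitive `N`-th root of unity.
-/

open Matrix
open scoped MatrixGroups

namespace Matrix.SpecialLinearGroup

variable {R : Type*} [CommRing R]

def diagUnits : Rˣ →* SL(2, R) where
  toFun u := ⟨!![(u : R), 0; 0, ↑u⁻¹], by simp [det_fin_two]⟩
  map_one' := by ext i j; fin_cases i <;> fin_cases j <;> rfl
  map_mul' u v := Subtype.ext <|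
    show !![((u * v : Rˣ) : R), 0; 0, ↑(u * v)⁻¹] =
        !![(u : R), 0; 0, ↑u⁻¹] * !![(v : R), 0; 0, ↑v⁻¹] by
      simp [mul_comm]

theorem coe_diagUnits (u : Rˣ) :
    (diagUnits u : Matrix (Fin 2) (Fin 2) R) = !![(u : R), 0; 0, ↑u⁻¹] :=
  rfl

theorem diagUnits_injective : Function.Injective (diagUnits : Rˣ →* SL(2, R)) := by
  intro u v huv
  ext
  simpa [coe_diagUnits] using congr_arg (fun g : SL(2, R) => (g : Matrix (Fin 2) (Fin 2) R) 0 0) huv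

theorem inv_mul_diagUnits_mul {H : SL(2, R)} (hH : (H : Matrix (Fin 2) (Fin 2) R) = !![0, 1; -1, 0])
    (u : Rˣ) : H⁻¹ * diagUnits u * H = diagUnits u⁻¹ := by
  ext i j
  fin_cases i <;> fin_cases j <;> simp [coe_inv, adjugate_fin_two, hH, coe_diagUnits]

theorem diagUnits_zpow_mul_zpow_eq_conj_iff {H : SL(2, R)}
    (hH : (H : Matrix (Fin 2) (Fin 2) R) = !![0, 1; -1, 0]) (u : Rˣ) (k l a c m : ℤ) :
    diagUnits (u ^ k) ^ a * diagUnits (u ^ l) ^ c = H⁻¹ * diagUnits (u ^ m) * H ↔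
      u ^ (k * a + l * c + m) = 1 := by
  rw [inv_mul_diagUnits_mul hH, ← map_zpow, ← map_zpow, ← map_mul, diagUnits_injective.eq_iff,
    ← mul_eq_one_iff_eq_inv, ← _root_.zpow_mul, ← _root_.zpow_mul, ← _root_.zpow_add,
    ← _root_.zpow_add]

end Matrix.SpecialLinearGroup

theorem stmt_3 (a b c d : ℤ) (N : ℕ) (hN : 0 < N) (k l : ℤ)
    (ζ : ℂ) (hζ : ζ = Complex.exp (2 * Real.pi * Complex.I / N))
    (X Y H : Matrix.SpecialLinearGroup (Fin 2) ℂ)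
    (hX : (X : Matrix (Fin 2) (Fin 2) ℂ) = !![ζ ^ k, 0; 0, ζ ^ (-k)])
    (hY : (Y : Matrix (Fin 2) (Fin 2) ℂ) = !![ζ ^ l, 0; 0, ζ ^ (-l)])
    (hH : (H : Matrix (Fin 2) (Fin 2) ℂ) = !![0, 1; -1, 0]) :
    (X ^ a * Y ^ c = H⁻¹ * X * H ∧ X ^ b * Y ^ d = H⁻¹ * Y * H ∧ X * Y = Y * X) ↔
      ((N : ℤ) ∣ (a + 1) * k + c * l ∧ (N : ℤ) ∣ b * k + (d + 1) * l) := by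
  have hζN : IsPrimitiveRoot ζ N := hζ ▸ Complex.isPrimitiveRoot_exp N hN.ne'
  set u : ℂˣ := (hζN.isUnit hN.ne').unit
  have huN : IsPrimitiveRoot u N := hζN.isUnit_unit hN.ne'
  have hdiag {M : SL(2, ℂ)} {m : ℤ}
      (hM : (M : Matrix (Fin 2) (Fin 2) ℂ) = !![ζ ^ m, 0; 0, ζ ^ (-m)]) :
      M = SpecialLinearGroup.diagUnits (u ^ m) :=
    Subtype.ext <| by
      rw [hM, SpecialLinearGroup.coe_diagUnits, ← _root_.zpow_neg, Units.val_zpow_eq_zpow_val,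
        Units.val_zpow_eq_zpow_val, IsUnit.unit_spec]
  obtain rfl := hdiag hX
  obtain rfl := hdiag hY
  rw [SpecialLinearGroup.diagUnits_zpow_mul_zpow_eq_conj_iff hH,
    SpecialLinearGroup.diagUnits_zpow_mul_zpow_eq_conj_iff hH, ← map_mul, ← map_mul,
    mul_comm (u ^ k), huN.zpow_eq_one_iff_dvd, huN.zpow_eq_one_iff_dvd,
    show (a + 1) * k + c * l = k * a + l * c + k by ring,
    show b * k + (d + 1) * l = k * b + l * d + l by ring]
  simp only [and_true]
end

section
/- Let a,b,c,d ∈ ℤ with ad − bc = 1 and c ≠ 0. Let ε_x, ε_y ∈ {0,1}, u ∈ ℂ, and v ∈ ℂ with v ≠ 0. Set X = (−1)^{ε_x}·((1,1),(0,1)), Y = (−1)^{ε_y}·((1,u),(0,1)), and H = diag(v, v⁻¹) in SL(2,ℂ). Then the relations X^a Y^c = H⁻¹ X H, X^b Y^d = H⁻¹ Y H, and X Y = Y X all hold if and only if: u = (v⁻² − a)/c, (v + v⁻¹)² = a + d + 2, (a+1)ε_x + c·ε_y is even, and b·ε_x + (d+1)ε_y is even. -/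
/-!
All matrices involved lie in the abelian group of matrices `s • [[1, t], [0, 1]]` with `s = ±1`,
which multiply as pairs `(s, t)` in `{±1} × K`, and conjugation by `diag(v, v⁻¹)` rescales `t`
by `v⁻²`. So `X * Y = Y * X` is automatic, and a relation `X ^ m * Y ^ n = H⁻¹ * Z * H` with
`Z = ±[[1, t], [0, 1]]` splits into a sign equation, which is a parity condition, and the linear
equation `m + n u = t v⁻²`. The two linear equations together say that the row vector `(1, u)` is
a left eigenvector of `A` for the eigenvalue `v⁻²`; as `det A = 1`, this eigenvalue is a root of
`λ² - (a + d) λ + 1`, i.e. `v² + v⁻² = a + d`.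
-/

open Matrix
open scoped MatrixGroups

variable {K : Type*} [Field K]

theorem neg_one_zpow_eq_neg_one_zpow_iff [CharZero K] (m n : ℤ) :
    (-1 : K) ^ m = (-1) ^ n ↔ Even (m + n) := by
  rw [neg_one_zpow_eq_ite, neg_one_zpow_eq_ite, Int.even_add]
  split_ifs <;> norm_num [*]

theorem smul_unipotent (s t : K) : s • !![1, t; 0, 1] = !![s, s * t; 0, s] := by
  ext i j; fin_cases i <;> fin_cases j <;> simp

theorem smul_unipotent_mul_smul_unipotent (s s' t t' : K) :
    (s • !![1, t; 0, 1]) * (s' • !![1, t'; 0, 1]) = (s * s') • !![1, t + t'; 0, 1] := by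
  simp only [smul_unipotent, mul_fin_two]
  congrm !![?_, ?_; ?_, ?_] <;> ring

theorem smul_unipotent_inj {s s' t t' : K} (hs : s ≠ 0) :
    s • !![1, t; 0, 1] = s' • !![1, t'; 0, 1] ↔ s = s' ∧ t = t' := by
  refine ⟨fun h => ?_, by rintro ⟨rfl, rfl⟩; rfl⟩
  have h00 : s = s' := by simpa using congrFun (congrFun h 0) 0
  have h01 : s * t = s' * t' := by simpa using congrFun (congrFun h 0) 1
  subst h00
  exact ⟨rfl, mul_left_cancel₀ hs h01⟩

theorem ne_zero_of_coe_eq_diag {h : SL(2, K)} {v : K}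
    (hh : (h : Matrix (Fin 2) (Fin 2) K) = !![v, 0; 0, v⁻¹]) : v ≠ 0 := by
  rintro rfl
  simpa [hh] using h.det_coe

theorem coe_inv_mul_mul_of_coe_eq_diag {h M : SL(2, K)} {v s t : K}
    (hh : (h : Matrix (Fin 2) (Fin 2) K) = !![v, 0; 0, v⁻¹])
    (hM : (M : Matrix (Fin 2) (Fin 2) K) = s • !![1, t; 0, 1]) :
    ((h⁻¹ * M * h : SL(2, K)) : Matrix (Fin 2) (Fin 2) K) =
      s • !![1, t * v⁻¹ ^ 2; 0, 1] := by
  have hv := ne_zero_of_coe_eq_diag hh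
  simp only [Matrix.SpecialLinearGroup.coe_mul, Matrix.SpecialLinearGroup.coe_inv, hh, hM,
    adjugate_fin_two_of, smul_unipotent, mul_fin_two]
  congrm !![?_, ?_; ?_, ?_] <;> field_simp <;> ring

theorem commute_of_coe_eq_smul_unipotent {M N : SL(2, K)} {s s' t t' : K}
    (hM : (M : Matrix (Fin 2) (Fin 2) K) = s • !![1, t; 0, 1])
    (hN : (N : Matrix (Fin 2) (Fin 2) K) = s' • !![1, t'; 0, 1]) : M * N = N * M := by
  ext1
  simp only [Matrix.SpecialLinearGroup.coe_mul, hM, hN, smul_unipotent_mul_smul_unipotent,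
    mul_comm s, add_comm t]

theorem coe_zpow_of_coe_eq_smul_unipotent {M : SL(2, K)} {ε : ℤ} {t : K}
    (hM : (M : Matrix (Fin 2) (Fin 2) K) = (-1 : K) ^ ε • !![1, t; 0, 1]) (n : ℤ) :
    ((M ^ n : SL(2, K)) : Matrix (Fin 2) (Fin 2) K) =
      (-1 : K) ^ (ε * n) • !![1, n * t; 0, 1] := by
  have hinv : ((M⁻¹ : SL(2, K)) : Matrix (Fin 2) (Fin 2) K) =
      (-1 : K) ^ (-ε) • !![1, -t; 0, 1] := by
    rw [Matrix.SpecialLinearGroup.coe_inv, hM, _root_.zpow_neg, ← _root_.inv_zpow, inv_neg_one,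
      smul_unipotent, smul_unipotent, adjugate_fin_two_of]
    congrm !![?_, ?_; ?_, ?_] <;> ring
  induction n using Int.induction_on with
  | zero => simp [one_fin_two]
  | succ k ih =>
    rw [_root_.zpow_add_one, Matrix.SpecialLinearGroup.coe_mul, ih, hM,
      smul_unipotent_mul_smul_unipotent, ← zpow_add₀ (by norm_num)]
    push_cast; ring_nf
  | pred k ih =>
    rw [_root_.zpow_sub_one, Matrix.SpecialLinearGroup.coe_mul, ih, hinv,
      smul_unipotent_mul_smul_unipotent, ← zpow_add₀ (by norm_num)]
    push_cast; ring_nf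

theorem zpow_mul_zpow_eq_inv_mul_mul_iff [CharZero K] {x y z h : SL(2, K)} {εx εy ε : ℤ}
    {p q r v : K} (hx : (x : Matrix (Fin 2) (Fin 2) K) = (-1 : K) ^ εx • !![1, p; 0, 1])
    (hy : (y : Matrix (Fin 2) (Fin 2) K) = (-1 : K) ^ εy • !![1, q; 0, 1])
    (hz : (z : Matrix (Fin 2) (Fin 2) K) = (-1 : K) ^ ε • !![1, r; 0, 1])
    (hh : (h : Matrix (Fin 2) (Fin 2) K) = !![v, 0; 0, v⁻¹]) (m n : ℤ) :
    x ^ m * y ^ n = h⁻¹ * z * h ↔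
      Even (εx * m + εy * n + ε) ∧ m * p + n * q = r * v⁻¹ ^ 2 := by
  refine Subtype.ext_iff.trans ?_
  rw [Matrix.SpecialLinearGroup.coe_mul, coe_zpow_of_coe_eq_smul_unipotent hx,
    coe_zpow_of_coe_eq_smul_unipotent hy, coe_inv_mul_mul_of_coe_eq_diag hh hz,
    smul_unipotent_mul_smul_unipotent, ← zpow_add₀ (by norm_num),
    smul_unipotent_inj (zpow_ne_zero _ (by norm_num)), neg_one_zpow_eq_neg_one_zpow_iff]

theorem left_eigenvector_iff {a b c d u v : K} (hdet : a * d - b * c = 1) (hc : c ≠ 0)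
    (hv : v ≠ 0) :
    (a + c * u = v⁻¹ ^ 2 ∧ b + d * u = u * v⁻¹ ^ 2) ↔
      (u = (v⁻¹ ^ 2 - a) / c ∧ (v + v⁻¹) ^ 2 = a + d + 2) := by
  constructor
  · rintro ⟨e1, e2⟩
    field_simp at e1 e2
    constructor
    · rw [eq_div_iff hc]
      field_simp
      linear_combination e1
    · field_simp
      linear_combination (d * v ^ 2 - 1) * e1 - c * v ^ 2 * e2 - v ^ 4 * hdet
  · rintro ⟨rfl, htr⟩
    field_simp at htr ⊢
    constructor
    · ring
    · linear_combination (-v ^ 4) * hdet - htr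

theorem stmt_4_general (a b c d : ℤ) (h1 : a * d - b * c = 1) (hc : c ≠ 0)
    (εx εy : ℤ)
    (u v : ℂ)
    (X Y H : Matrix.SpecialLinearGroup (Fin 2) ℂ)
    (hX : (X : Matrix (Fin 2) (Fin 2) ℂ) = ((-1 : ℂ) ^ εx) • !![1, 1; 0, 1])
    (hY : (Y : Matrix (Fin 2) (Fin 2) ℂ) = ((-1 : ℂ) ^ εy) • !![1, u; 0, 1])
    (hH : (H : Matrix (Fin 2) (Fin 2) ℂ) = !![v, 0; 0, v⁻¹]) :
    (X ^ a * Y ^ c = H⁻¹ * X * H ∧ X ^ b * Y ^ d = H⁻¹ * Y * H ∧ X * Y = Y * X) ↔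
      (u = ((v⁻¹) ^ 2 - (a : ℂ)) / (c : ℂ) ∧
        (v + v⁻¹) ^ 2 = (a : ℂ) + (d : ℂ) + 2 ∧
        Even ((a + 1) * εx + c * εy) ∧ Even (b * εx + (d + 1) * εy)) := by
  have hdet : (a * d - b * c : ℂ) = 1 := by exact_mod_cast h1
  have heigen :=
    left_eigenvector_iff (u := u) hdet (Int.cast_ne_zero.mpr hc) (ne_zero_of_coe_eq_diag hH)
  rw [zpow_mul_zpow_eq_inv_mul_mul_iff hX hY hX hH, zpow_mul_zpow_eq_inv_mul_mul_iff hX hY hY hH,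
    iff_true_intro (commute_of_coe_eq_smul_unipotent hX hY), and_true,
    show (a + 1) * εx + c * εy = εx * a + εy * c + εx by ring,
    show b * εx + (d + 1) * εy = εx * b + εy * d + εy by ring]
  simp only [mul_one, one_mul]
  tauto

theorem stmt_4 (a b c d : ℤ) (h1 : a * d - b * c = 1) (hc : c ≠ 0)
    (εx εy : ℤ) (hεx : εx = 0 ∨ εx = 1) (hεy : εy = 0 ∨ εy = 1)
    (u v : ℂ) (hv : v ≠ 0)
    (X Y H : Matrix.SpecialLinearGroup (Fin 2) ℂ)
    (hX : (X : Matrix (Fin 2) (Fin 2) ℂ) = ((-1 : ℂ) ^ εx) • !![1, 1; 0, 1])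
    (hY : (Y : Matrix (Fin 2) (Fin 2) ℂ) = ((-1 : ℂ) ^ εy) • !![1, u; 0, 1])
    (hH : (H : Matrix (Fin 2) (Fin 2) ℂ) = !![v, 0; 0, v⁻¹]) :
    (X ^ a * Y ^ c = H⁻¹ * X * H ∧ X ^ b * Y ^ d = H⁻¹ * Y * H ∧ X * Y = Y * X) ↔
      (u = ((v⁻¹) ^ 2 - (a : ℂ)) / (c : ℂ) ∧
        (v + v⁻¹) ^ 2 = (a : ℂ) + (d : ℂ) + 2 ∧
        Even ((a + 1) * εx + c * εy) ∧ Even (b * εx + (d + 1) * εy)) :=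
  stmt_4_general a b c d h1 hc εx εy u v X Y H hX hY hH
end

section
/- Let N be a positive integer, ζ = exp(2πi/N), and k₁,l₁,k₂,l₂ ∈ ℤ. For i = 1,2 let ρᵢ : F₃ → SL(2,ℂ) be the homomorphism from the free group on three generators x, y, h determined by ρᵢ(x) = diag(ζ^{kᵢ}, ζ^{−kᵢ}), ρᵢ(y) = diag(ζ^{lᵢ}, ζ^{−lᵢ}), ρᵢ(h) = ((0,1),(−1,0)). Then tr(ρ₁(g)) = tr(ρ₂(g)) for every element g of the free group if and only if either (k₁ ≡ k₂ mod N and l₁ ≡ l₂ mod N) or (k₁ ≡ −k₂ mod N and l₁ ≡ −l₂ mod N). -/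
open Matrix

private lemma zpow_modeq_eq {ζ : ℂ} {N : ℕ} (hprim : IsPrimitiveRoot ζ N) (hζ0 : ζ ≠ 0)
    {a b : ℤ} (h : a ≡ b [ZMOD (N : ℤ)]) : ζ ^ a = ζ ^ b := by
  have hd : (N : ℤ) ∣ b - a := h.dvd
  have h1 : ζ ^ (b - a) = 1 := (hprim.zpow_eq_one_iff_dvd _).2 hd
  calc ζ ^ a = ζ ^ a * ζ ^ (b - a) := by rw [h1, mul_one]
    _ = ζ ^ b := by rw [← zpow_add₀ hζ0]; ring_nf

private lemma modeq_of_zpow_eq {ζ : ℂ} {N : ℕ} (hprim : IsPrimitiveRoot ζ N) (hζ0 : ζ ≠ 0)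
    {a b : ℤ} (h : ζ ^ a = ζ ^ b) : a ≡ b [ZMOD (N : ℤ)] := by
  have h1 : ζ ^ (b - a) = 1 := by
    rw [zpow_sub₀ hζ0, h, div_self (zpow_ne_zero _ hζ0)]
  exact Int.modEq_of_dvd ((hprim.zpow_eq_one_iff_dvd _).1 h1)

private lemma modeq_of_trace_eq {ζ : ℂ} {N : ℕ} (hprim : IsPrimitiveRoot ζ N) (hζ0 : ζ ≠ 0)
    {a b : ℤ} (h : ζ ^ a + ζ ^ (-a) = ζ ^ b + ζ ^ (-b)) :
    a ≡ b [ZMOD (N : ℤ)] ∨ a ≡ -b [ZMOD (N : ℤ)] := by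
  have ha : ζ ^ a * ζ ^ (-a) = 1 := by rw [← zpow_add₀ hζ0]; simp
  have hb : ζ ^ b * ζ ^ (-b) = 1 := by rw [← zpow_add₀ hζ0]; simp
  have key : (ζ ^ a - ζ ^ b) * (ζ ^ a - ζ ^ (-b)) = 0 := by
    linear_combination ζ ^ a * h + hb - ha
  rcases mul_eq_zero.1 key with h' | h'
  · exact Or.inl (modeq_of_zpow_eq hprim hζ0 (sub_eq_zero.1 h'))
  · exact Or.inr (modeq_of_zpow_eq hprim hζ0 (sub_eq_zero.1 h'))

theorem stmt_6 (N : ℕ) (hN : 0 < N)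
    (ζ : ℂ) (hζ : ζ = Complex.exp (2 * Real.pi * Complex.I / N))
    (k₁ l₁ k₂ l₂ : ℤ)
    (ρ₁ ρ₂ : FreeGroup (Fin 3) →* Matrix.SpecialLinearGroup (Fin 2) ℂ)
    (hρ₁x : (ρ₁ (FreeGroup.of 0) : Matrix (Fin 2) (Fin 2) ℂ) = !![ζ ^ k₁, 0; 0, ζ ^ (-k₁)])
    (hρ₁y : (ρ₁ (FreeGroup.of 1) : Matrix (Fin 2) (Fin 2) ℂ) = !![ζ ^ l₁, 0; 0, ζ ^ (-l₁)])
    (hρ₁h : (ρ₁ (FreeGroup.of 2) : Matrix (Fin 2) (Fin 2) ℂ) = !![0, 1; -1, 0])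
    (hρ₂x : (ρ₂ (FreeGroup.of 0) : Matrix (Fin 2) (Fin 2) ℂ) = !![ζ ^ k₂, 0; 0, ζ ^ (-k₂)])
    (hρ₂y : (ρ₂ (FreeGroup.of 1) : Matrix (Fin 2) (Fin 2) ℂ) = !![ζ ^ l₂, 0; 0, ζ ^ (-l₂)])
    (hρ₂h : (ρ₂ (FreeGroup.of 2) : Matrix (Fin 2) (Fin 2) ℂ) = !![0, 1; -1, 0]) :
    (∀ g : FreeGroup (Fin 3),
        Matrix.trace (ρ₁ g : Matrix (Fin 2) (Fin 2) ℂ)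
          = Matrix.trace (ρ₂ g : Matrix (Fin 2) (Fin 2) ℂ)) ↔
      ((k₁ ≡ k₂ [ZMOD (N : ℤ)] ∧ l₁ ≡ l₂ [ZMOD (N : ℤ)]) ∨
        (k₁ ≡ -k₂ [ZMOD (N : ℤ)] ∧ l₁ ≡ -l₂ [ZMOD (N : ℤ)])) := by
  have hζ0 : ζ ≠ 0 := by rw [hζ]; exact Complex.exp_ne_zero _
  have hprim : IsPrimitiveRoot ζ N := by rw [hζ]; exact Complex.isPrimitiveRoot_exp _ hN.ne'
  constructor
  · intro htr
    have hk : ζ ^ k₁ + ζ ^ (-k₁) = ζ ^ k₂ + ζ ^ (-k₂) := by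
      have := htr (FreeGroup.of 0)
      rwa [hρ₁x, hρ₂x, Matrix.trace_fin_two, Matrix.trace_fin_two] at this
    have hl : ζ ^ l₁ + ζ ^ (-l₁) = ζ ^ l₂ + ζ ^ (-l₂) := by
      have := htr (FreeGroup.of 1)
      rwa [hρ₁y, hρ₂y, Matrix.trace_fin_two, Matrix.trace_fin_two] at this
    have hkl : ζ ^ (k₁ + l₁) + ζ ^ (-(k₁ + l₁)) = ζ ^ (k₂ + l₂) + ζ ^ (-(k₂ + l₂)) := by
      have := htr (FreeGroup.of 0 * FreeGroup.of 1)
      rw [_root_.map_mul, _root_.map_mul, Matrix.SpecialLinearGroup.coe_mul,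
        Matrix.SpecialLinearGroup.coe_mul, hρ₁x, hρ₁y, hρ₂x, hρ₂y,
        Matrix.mul_fin_two, Matrix.mul_fin_two, Matrix.trace_fin_two,
        Matrix.trace_fin_two] at this
      simp only [Matrix.cons_val', Matrix.cons_val_zero, Matrix.cons_val_one,
        Matrix.head_cons, Matrix.empty_val', Matrix.cons_val_fin_one, Matrix.head_fin_const,
        Matrix.of_apply, Matrix.cons_val_fin_one, mul_zero, zero_mul, add_zero,
        zero_add] at this
      rw [zpow_add₀ hζ0, zpow_add₀ hζ0, neg_add, neg_add,
        zpow_add₀ hζ0, zpow_add₀ hζ0]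
      linear_combination this
    have ha := modeq_of_trace_eq hprim hζ0 hk
    have hb := modeq_of_trace_eq hprim hζ0 hl
    have hc := modeq_of_trace_eq hprim hζ0 hkl
    rcases ha with ha | ha <;> rcases hb with hb | hb
    · exact Or.inl ⟨ha, hb⟩
    · rcases hc with hc | hc
      · exact Or.inl ⟨ha, by simpa using hc.sub ha⟩
      · exact Or.inr ⟨by simpa using hc.sub hb, hb⟩
    · rcases hc with hc | hc
      · exact Or.inl ⟨by simpa using hc.sub hb, hb⟩
      · exact Or.inr ⟨ha, by simpa using hc.sub ha⟩
    · exact Or.inr ⟨ha, hb⟩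
  · intro hcase
    rcases hcase with ⟨hk, hl⟩ | ⟨hk, hl⟩
    · have e0 : ρ₁ (FreeGroup.of 0) = ρ₂ (FreeGroup.of 0) := Subtype.ext (by
        rw [hρ₁x, hρ₂x, zpow_modeq_eq hprim hζ0 hk, zpow_modeq_eq hprim hζ0 hk.neg])
      have e1 : ρ₁ (FreeGroup.of 1) = ρ₂ (FreeGroup.of 1) := Subtype.ext (by
        rw [hρ₁y, hρ₂y, zpow_modeq_eq hprim hζ0 hl, zpow_modeq_eq hprim hζ0 hl.neg])
      have e2 : ρ₁ (FreeGroup.of 2) = ρ₂ (FreeGroup.of 2) := Subtype.ext (by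
        rw [hρ₁h, hρ₂h])
      have : ρ₁ = ρ₂ := by
        apply FreeGroup.ext_hom
        intro a
        fin_cases a
        exacts [e0, e1, e2]
      intro g; rw [this]
    · have hHinv : (((ρ₂ (FreeGroup.of 2))⁻¹ : Matrix.SpecialLinearGroup (Fin 2) ℂ) :
          Matrix (Fin 2) (Fin 2) ℂ) = !![0, -1; 1, 0] := by
        rw [Matrix.SpecialLinearGroup.coe_inv, hρ₂h, Matrix.adjugate_fin_two]
        norm_num
      have e0 : ρ₁ (FreeGroup.of 0)
          = ρ₂ (FreeGroup.of 2) * ρ₂ (FreeGroup.of 0) * (ρ₂ (FreeGroup.of 2))⁻¹ :=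
        Subtype.ext (by
          rw [Matrix.SpecialLinearGroup.coe_mul, Matrix.SpecialLinearGroup.coe_mul,
            hρ₁x, hρ₂x, hρ₂h, hHinv, zpow_modeq_eq hprim hζ0 hk,
            zpow_modeq_eq hprim hζ0 hk.neg, Matrix.mul_fin_two, Matrix.mul_fin_two]
          norm_num)
      have e1 : ρ₁ (FreeGroup.of 1)
          = ρ₂ (FreeGroup.of 2) * ρ₂ (FreeGroup.of 1) * (ρ₂ (FreeGroup.of 2))⁻¹ :=
        Subtype.ext (by
          rw [Matrix.SpecialLinearGroup.coe_mul, Matrix.SpecialLinearGroup.coe_mul,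
            hρ₁y, hρ₂y, hρ₂h, hHinv, zpow_modeq_eq hprim hζ0 hl,
            zpow_modeq_eq hprim hζ0 hl.neg, Matrix.mul_fin_two, Matrix.mul_fin_two]
          norm_num)
      have e2 : ρ₁ (FreeGroup.of 2)
          = ρ₂ (FreeGroup.of 2) * ρ₂ (FreeGroup.of 2) * (ρ₂ (FreeGroup.of 2))⁻¹ := by
        rw [mul_inv_cancel_right]
        exact Subtype.ext (by rw [hρ₁h, hρ₂h])
      have hconj : ρ₁ = (MulAut.conj (ρ₂ (FreeGroup.of 2))).toMonoidHom.comp ρ₂ := by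
        apply FreeGroup.ext_hom
        intro a
        fin_cases a
        exacts [e0, e1, e2]
      intro g
      rw [hconj]
      show Matrix.trace ((ρ₂ (FreeGroup.of 2) * ρ₂ g * (ρ₂ (FreeGroup.of 2))⁻¹ :
          Matrix.SpecialLinearGroup (Fin 2) ℂ) : Matrix (Fin 2) (Fin 2) ℂ) = _
      rw [Matrix.SpecialLinearGroup.coe_mul, Matrix.SpecialLinearGroup.coe_mul,
        Matrix.trace_mul_cycle, ← Matrix.SpecialLinearGroup.coe_mul, inv_mul_cancel,
        Matrix.SpecialLinearGroup.coe_one, Matrix.one_mul]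
end

section
/- Let a,b,c,d be integers with ad − bc = 1 and set N = |a + d + 2|. If f(μ₁,ν₁) = f(μ₂,ν₂) in ℤ/N × ℤ/N, then q̂(μ₁,ν₁) ≡ q̂(μ₂,ν₂) (mod N). Consequently q̂ induces a well-defined map on the image of f with values in ℤ/N. -/
/-- The quadratic form `q̂ : ℤ × ℤ → ℤ`, `q̂(μ,ν) = cν² + (a−d)μν − bμ²`. -/
def torusBundleQhat (a b c d : ℤ) (μ ν : ℤ) : ℤ :=
  c * ν ^ 2 + (a - d) * μ * ν - b * μ ^ 2

theorem stmt_7 (a b c d : ℤ) (h1 : a * d - b * c = 1)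
    (N : ℕ) (hN : N = (a + d + 2).natAbs) :
    (∀ μ₁ ν₁ μ₂ ν₂ : ℤ,
        torusBundleF a b c d N (μ₁, ν₁) = torusBundleF a b c d N (μ₂, ν₂) →
          torusBundleQhat a b c d μ₁ ν₁ ≡ torusBundleQhat a b c d μ₂ ν₂ [ZMOD (N : ℤ)]) ∧
      ∃ qt : (torusBundleF a b c d N).range → ZMod N,
        ∀ μ ν : ℤ,
          qt ⟨torusBundleF a b c d N (μ, ν), ⟨(μ, ν), rfl⟩⟩
            = ((torusBundleQhat a b c d μ ν : ℤ) : ZMod N) := by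
  have hD : ((a + d + 2 : ℤ) : ZMod N) = 0 := by
    rw [ZMod.intCast_zmod_eq_zero_iff_dvd, hN]
    exact Int.natAbs_dvd.mpr dvd_rfl
  have key : ∀ μ₁ ν₁ μ₂ ν₂ : ℤ,
      torusBundleF a b c d N (μ₁, ν₁) = torusBundleF a b c d N (μ₂, ν₂) →
        torusBundleQhat a b c d μ₁ ν₁ ≡ torusBundleQhat a b c d μ₂ ν₂ [ZMOD (N : ℤ)] := by
    intro μ₁ ν₁ μ₂ ν₂ hf
    have hu : (((d + 1) * μ₁ - c * ν₁ : ℤ) : ZMod N)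
        = (((d + 1) * μ₂ - c * ν₂ : ℤ) : ZMod N) := congrArg Prod.fst hf
    have hw : (((-b) * μ₁ + (a + 1) * ν₁ : ℤ) : ZMod N)
        = (((-b) * μ₂ + (a + 1) * ν₂ : ℤ) : ZMod N) := congrArg Prod.snd hf
    rw [Int.ModEq] at *
    have : ((torusBundleQhat a b c d μ₁ ν₁ : ℤ) : ZMod N)
        = ((torusBundleQhat a b c d μ₂ ν₂ : ℤ) : ZMod N) := by
      unfold torusBundleQhat
      push_cast at hu hw hD ⊢
      linear_combination (((ν₂ : ZMod N) * (μ₁ - μ₂) - μ₂ * (ν₁ - ν₂)) * hD)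
        - (2 * (ν₂ : ZMod N) + (ν₁ - ν₂)) * hu + (2 * (μ₂ : ZMod N) + (μ₁ - μ₂)) * hw
    exact (ZMod.intCast_eq_intCast_iff' _ _ _).mp this
  refine ⟨key, ?_⟩
  refine ⟨fun x => ((torusBundleQhat a b c d (Classical.choose x.2).1
      (Classical.choose x.2).2 : ℤ) : ZMod N), ?_⟩
  intro μ ν
  set x : (torusBundleF a b c d N).range :=
    ⟨torusBundleF a b c d N (μ, ν), ⟨(μ, ν), rfl⟩⟩ with hx
  have hspec : torusBundleF a b c d N (Classical.choose x.2) = x.1 :=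
    Classical.choose_spec x.2
  have hfx : torusBundleF a b c d N ((Classical.choose x.2).1, (Classical.choose x.2).2)
      = torusBundleF a b c d N (μ, ν) := by
    rw [Prod.mk.eta, hspec]
  have := key _ _ _ _ hfx
  rw [Int.ModEq] at this
  exact (ZMod.intCast_eq_intCast_iff' _ _ _).mpr (by exact_mod_cast this)
end

section
/- Let a,b,c,d be integers with ad − bc = 1. Then for all integers μ, ν, i, j: q̂(μ + (a+1)i + cj, ν + bi + (d+1)j) ≡ q̂(μ,ν) (mod a + d + 2). In particular, q̂(μ + a + 1, ν + b) ≡ q̂(μ,ν) and q̂(μ + c, ν + d + 1) ≡ q̂(μ,ν) modulo a + d + 2. -/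
theorem stmt_8 (a b c d : ℤ) (h1 : a * d - b * c = 1) :
    (∀ μ ν i j : ℤ,
        torusBundleQhat a b c d (μ + (a + 1) * i + c * j) (ν + b * i + (d + 1) * j)
          ≡ torusBundleQhat a b c d μ ν [ZMOD (a + d + 2)]) ∧
      (∀ μ ν : ℤ,
        torusBundleQhat a b c d (μ + a + 1) (ν + b)
          ≡ torusBundleQhat a b c d μ ν [ZMOD (a + d + 2)]) ∧
      (∀ μ ν : ℤ,
        torusBundleQhat a b c d (μ + c) (ν + d + 1)
          ≡ torusBundleQhat a b c d μ ν [ZMOD (a + d + 2)]) := by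
  have key : ∀ μ ν i j : ℤ,
      torusBundleQhat a b c d (μ + (a + 1) * i + c * j) (ν + b * i + (d + 1) * j)
        ≡ torusBundleQhat a b c d μ ν [ZMOD (a + d + 2)] := by
    intro μ ν i j
    refine Int.modEq_iff_dvd.mpr ⟨-(d * (-2 * μ * j + 2 * ν * i + b * i ^ 2
        + 2 * (d + 1) * i * j - c * j ^ 2)
      + ((μ - (d + 1) * i + c * j) * (ν + b * i + (d + 1) * j) - μ * ν
        + (a + d + 2) * i * (ν + b * i + (d + 1) * j)
        - 2 * (d + 1) * i * (ν + b * i + (d + 1) * j)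
        - 2 * b * (μ - (d + 1) * i + c * j) * i - b * (a + d + 2) * i ^ 2)), ?_⟩
    simp only [torusBundleQhat]
    linear_combination (-2 * μ * j + 2 * ν * i + b * i ^ 2
      + 2 * (d + 1) * i * j - c * j ^ 2) * h1
  refine ⟨key, fun μ ν => ?_, fun μ ν => ?_⟩
  · have h := key μ ν 1 0
    rwa [show μ + (a + 1) * 1 + c * 0 = μ + a + 1 by ring,
        show ν + b * 1 + (d + 1) * 0 = ν + b by ring] at h
  · have h := key μ ν 0 1
    rwa [show μ + (a + 1) * 0 + c * 1 = μ + c by ring,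
        show ν + b * 0 + (d + 1) * 1 = ν + d + 1 by ring] at h
end

section
/- Let a,b,c,d be integers with ad − bc = 1 and |a + d| > 2, and set N = |a + d + 2|. Let (μ₁,ν₁) ∈ ℤ × ℤ be such that 2·f(μ₁,ν₁) = (0,0) in ℤ/N × ℤ/N. Then for every (μ₂,ν₂) ∈ ℤ × ℤ, N divides λ((μ₁,ν₁),(μ₂,ν₂)). -/
/-- The bilinear form `λ((μ₁,ν₁),(μ₂,ν₂)) = −2b μ₁μ₂ + (a−d)(μ₁ν₂ + ν₁μ₂) + 2c ν₁ν₂`. -/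
def torusBundleLambda (a b c d : ℤ) (p q : ℤ × ℤ) : ℤ :=
  -2 * b * p.1 * q.1 + (a - d) * (p.1 * q.2 + p.2 * q.1) + 2 * c * p.2 * q.2

theorem stmt_10 (a b c d : ℤ) (h1 : a * d - b * c = 1) (h2 : 2 < |a + d|)
    (N : ℕ) (hN : N = (a + d + 2).natAbs)
    (μ₁ ν₁ : ℤ)
    (h2tor : 2 • torusBundleF a b c d N (μ₁, ν₁) = 0) :
    ∀ μ₂ ν₂ : ℤ, (N : ℤ) ∣ torusBundleLambda a b c d (μ₁, ν₁) (μ₂, ν₂) := by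
  intro μ₂ ν₂
  rw [Prod.ext_iff] at h2tor
  obtain ⟨hu, hv⟩ := h2tor
  have hu' : (N : ℤ) ∣ 2 * ((d + 1) * μ₁ - c * ν₁) := by
    rw [← ZMod.intCast_zmod_eq_zero_iff_dvd]
    push_cast
    rw [two_mul]; simpa [torusBundleF, two_smul] using hu
  have hv' : (N : ℤ) ∣ 2 * ((-b) * μ₁ + (a + 1) * ν₁) := by
    rw [← ZMod.intCast_zmod_eq_zero_iff_dvd]
    push_cast
    rw [two_mul]; simpa [torusBundleF, two_smul] using hv
  have hw : (N : ℤ) ∣ (a + d + 2) := by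
    rw [hN]; exact Int.natAbs_dvd.mpr dvd_rfl
  have key : torusBundleLambda a b c d (μ₁, ν₁) (μ₂, ν₂) =
      μ₂ * (2 * ((-b) * μ₁ + (a + 1) * ν₁)) - ν₂ * (2 * ((d + 1) * μ₁ - c * ν₁))
        + (a + d + 2) * (μ₁ * ν₂ - ν₁ * μ₂) := by
    simp only [torusBundleLambda]; ring
  rw [key]
  exact dvd_add (dvd_sub (Dvd.dvd.mul_left hv' _) (Dvd.dvd.mul_left hu' _))
    (Dvd.dvd.mul_right hw _)
end

section
/- Let a,b,c,d be integers with ad − bc = 1 and |a + d| > 2, set N = |a + d + 2|, and assume N is even. For ε_x, ε_y ∈ {0,1}, the element (ε_x·(N/2), ε_y·(N/2)) of ℤ/N × ℤ/N lies in the image of f if and only if (a+1)ε_x + c·ε_y is even and b·ε_x + (d+1)ε_y is even. -/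
theorem stmt_13 (a b c d : ℤ) (h1 : a * d - b * c = 1) (h2 : 2 < |a + d|)
    (N : ℕ) (hN : N = (a + d + 2).natAbs) (hNeven : Even N)
    (εx εy : ℤ) (hεx : εx = 0 ∨ εx = 1) (hεy : εy = 0 ∨ εy = 1) :
    ((((εx * ((N : ℤ) / 2) : ℤ) : ZMod N), ((εy * ((N : ℤ) / 2) : ℤ) : ZMod N))
        ∈ (torusBundleF a b c d N).range) ↔
      (Even ((a + 1) * εx + c * εy) ∧ Even (b * εx + (d + 1) * εy)) := by
  obtain ⟨k, hk⟩ := hNeven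
  have hD0 : a + d + 2 ≠ 0 := by
    rcases le_or_gt 0 (a + d) with h | h
    · rw [abs_of_nonneg h] at h2; omega
    · rw [abs_of_neg h] at h2; omega
  have hNpos : 0 < N := by rw [hN]; exact Int.natAbs_pos.mpr hD0
  have hkpos : (0 : ℤ) < (k : ℤ) := by
    have : 0 < k := by omega
    exact_mod_cast this
  have hk0 : (k : ℤ) ≠ 0 := ne_of_gt hkpos
  have hNk : (N : ℤ) = 2 * (k : ℤ) := by
    have : N = k + k := hk
    push_cast [this]; ring
  have hhalf : (N : ℤ) / 2 = (k : ℤ) := by rw [hNk]; omega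
  rw [hhalf]
  obtain ⟨S, hS, hS2⟩ : ∃ S : ℤ, a + d + 2 = (N : ℤ) * S ∧ (S = 1 ∨ S = -1) := by
    rcases Int.natAbs_eq (a + d + 2) with hD | hD
    · rw [← hN] at hD
      exact ⟨1, by linarith, Or.inl rfl⟩
    · rw [← hN] at hD
      exact ⟨-1, by linarith, Or.inr rfl⟩
  constructor
  · rintro ⟨⟨μ, ν⟩, hp⟩
    simp only [torusBundleF, AddMonoidHom.mk'_apply, Prod.mk.injEq] at hp
    obtain ⟨hp1, hp2⟩ := hp
    rw [ZMod.intCast_eq_intCast_iff] at hp1 hp2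
    obtain ⟨u, hu⟩ := hp1.dvd
    obtain ⟨w, hw⟩ := hp2.dvd
    constructor
    · have key : (a + 1) * (εx * (k : ℤ)) + c * (εy * (k : ℤ)) =
          (N : ℤ) * (S * μ + (a + 1) * u + c * w) := by
        linear_combination (a + 1) * hu + c * hw + μ * hS + μ * h1
      obtain ⟨m, hm⟩ : ∃ m : ℤ, (a + 1) * (εx * (k : ℤ)) + c * (εy * (k : ℤ)) = (N : ℤ) * m :=
        ⟨_, key⟩
      refine ⟨m, mul_left_cancel₀ hk0 ?_⟩
      linear_combination hm + m * hNk
    · have key : b * (εx * (k : ℤ)) + (d + 1) * (εy * (k : ℤ)) =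
          (N : ℤ) * (S * ν + b * u + (d + 1) * w) := by
        linear_combination b * hu + (d + 1) * hw + ν * hS + ν * h1
      obtain ⟨m, hm⟩ : ∃ m : ℤ, b * (εx * (k : ℤ)) + (d + 1) * (εy * (k : ℤ)) = (N : ℤ) * m :=
        ⟨_, key⟩
      refine ⟨m, mul_left_cancel₀ hk0 ?_⟩
      linear_combination hm + m * hNk
  · rintro ⟨⟨u', hu'⟩, ⟨w', hw'⟩⟩
    have hS' : a + d + 2 = 2 * (k : ℤ) * S := by rw [← hNk]; exact hS
    have h2k0 : (2 * (k : ℤ)) ≠ 0 := by positivity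
    have e1 : (d + 1) * (S * u') - c * (S * w') = εx * (k : ℤ) := by
      refine mul_left_cancel₀ h2k0 ?_
      rcases hS2 with rfl | rfl
      · linear_combination -(k : ℤ) * (d + 1) * hu' + (k : ℤ) * c * hw' +
          (k : ℤ) * εx * hS' + (k : ℤ) * εx * h1
      · linear_combination (k : ℤ) * (d + 1) * hu' - (k : ℤ) * c * hw' -
          (k : ℤ) * εx * hS' - (k : ℤ) * εx * h1
    have e2 : (-b) * (S * u') + (a + 1) * (S * w') = εy * (k : ℤ) := by
      refine mul_left_cancel₀ h2k0 ?_
      rcases hS2 with rfl | rfl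
      · linear_combination (k : ℤ) * b * hu' - (k : ℤ) * (a + 1) * hw' +
          (k : ℤ) * εy * hS' + (k : ℤ) * εy * h1
      · linear_combination -(k : ℤ) * b * hu' + (k : ℤ) * (a + 1) * hw' -
          (k : ℤ) * εy * hS' - (k : ℤ) * εy * h1
    refine ⟨(S * u', S * w'), ?_⟩
    simp only [torusBundleF, AddMonoidHom.mk'_apply]
    rw [e1, e2]
end
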